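/- arXiv:1410.7269 — 4 statements merged into one kernel-verified Lean document; each statement's English description precedes it below -/
import Mathlib

section
/- Let f : ℝ → ℝ with f(a) = a, and let h be a Lipschitz map with constant L on a neighborhood of a whose inverse h⁻¹ is Lipschitz with constant M on a neighborhood of b = h(a). If lim_{x→a} |f(x) - x| / |x - a|^μ = 0, then the conjugate g = h ∘ f ∘ h⁻¹ satisfies lim_{y→b} |g(y) - y| / |y - b|^μ = 0. -/
open Filter Topology Asymptotics

/-!
With `x = h⁻¹ y` we have `g y - y = h (f x) - h x`, so the Lipschitz bound for `h` gives
`|g y - y| ≤ L |f x - x|`, while the Lipschitz bound for `h⁻¹` gives `|x - a| ≤ M |y - b|`.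
Since `h⁻¹` maps punctured neighbourhoods of `b` into punctured neighbourhoods of `a`,
`f x - x = o(|x - a| ^ μ)` transfers to `g y - y = o(|y - b| ^ μ)`.
-/

lemma isLittleO_iff_tendsto_abs_div {α : Type*} {l : Filter α} {u v : α → ℝ}
    (hv : ∀ᶠ x in l, v x ≠ 0) :
    u =o[l] v ↔ Tendsto (fun x => |u x| / |v x|) l (𝓝 0) := by
  rw [isLittleO_iff_tendsto' (hv.mono fun _ hx h0 => absurd h0 hx),
    tendsto_zero_iff_abs_tendsto_zero]
  simp only [Function.comp_def, abs_div]

lemma sub_pow_ne_zero_nhdsNE (a : ℝ) (μ : ℕ) : ∀ᶠ x in 𝓝[≠] a, (x - a) ^ μ ≠ 0 :=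
  eventually_mem_nhdsWithin.mono fun _ hx => pow_ne_zero _ (sub_ne_zero.2 hx)

lemma LipschitzOnWith.isBigO_comp_sub_comp {α E F : Type*} [SeminormedAddCommGroup E]
    [SeminormedAddCommGroup F] {l : Filter α} {K : NNReal} {φ : E → F} {s : Set E}
    {u v : α → E} (hφ : LipschitzOnWith K φ s) (hu : ∀ᶠ x in l, u x ∈ s)
    (hv : ∀ᶠ x in l, v x ∈ s) :
    (fun x => φ (u x) - φ (v x)) =O[l] (fun x => u x - v x) :=
  IsBigO.of_bound K <| (hu.and hv).mono fun x ⟨hux, hvx⟩ => by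
    simpa only [dist_eq_norm] using hφ.dist_le_mul _ hux _ hvx

lemma tendsto_nhdsNE_of_eventually_leftInverse {X Y : Type*} [TopologicalSpace X]
    [TopologicalSpace Y] {g : X → Y} {k : Y → X} {b : X} (hg : ContinuousAt g b)
    (hk : ∀ᶠ y in 𝓝 b, k (g y) = y) : Tendsto g (𝓝[≠] b) (𝓝[≠] g b) := by
  refine tendsto_nhdsWithin_iff.2 ⟨hg.tendsto.mono_left nhdsWithin_le_nhds, ?_⟩
  filter_upwards [eventually_nhdsWithin_of_eventually_nhds hk, eventually_mem_nhdsWithin]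
    with y hky hyb hgy
  exact hyb (hky.symm.trans ((congrArg k hgy).trans hk.self_of_nhds))

lemma tendsto_nhdsNE_of_isLittleO_sub_pow {f : ℝ → ℝ} {a : ℝ} {μ : ℕ}
    (hf : (fun x => f x - x) =o[𝓝[≠] a] (fun x => (x - a) ^ μ)) :
    Tendsto f (𝓝[≠] a) (𝓝 a) := by
  have hbdd : Tendsto (fun x => (x - a) ^ μ) (𝓝[≠] a) (𝓝 ((a - a) ^ μ)) :=
    ((continuous_sub_right a).pow μ).continuousAt.tendsto.mono_left nhdsWithin_le_nhds
  have hdiff := (hf.tendsto_zero_of_tendsto hbdd).add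
    (tendsto_id.mono_left (nhdsWithin_le_nhds (a := a) (s := {a}ᶜ)))
  simpa using hdiff

theorem stmt_0_general (μ : ℕ) (f h hinv : ℝ → ℝ) (a b : ℝ) (L M : NNReal)
    (Ih Jb : Set ℝ) (hIh : Ih ∈ 𝓝 a) (hJb : Jb ∈ 𝓝 b)
    (hb : h a = b)
    (hL : LipschitzOnWith L h Ih) (hM : LipschitzOnWith M hinv Jb)
    (hleft : ∀ x ∈ Ih, hinv (h x) = x) (hright : ∀ y ∈ Jb, h (hinv y) = y)
    (hlim : Tendsto (fun x => |f x - x| / |x - a| ^ μ) (𝓝[≠] a) (𝓝 0)) :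
    Tendsto (fun y => |h (f (hinv y)) - y| / |y - b| ^ μ) (𝓝[≠] b) (𝓝 0) := by
  have hinvb : hinv b = a := by rw [← hb, hleft a (mem_of_mem_nhds hIh)]
  have hright_nhds : ∀ᶠ y in 𝓝 b, h (hinv y) = y := eventually_of_mem hJb hright
  have hx : Tendsto hinv (𝓝[≠] b) (𝓝[≠] a) := hinvb ▸
    tendsto_nhdsNE_of_eventually_leftInverse (hM.continuousOn.continuousAt hJb) hright_nhds
  have hfo : (fun x => f x - x) =o[𝓝[≠] a] (fun x => (x - a) ^ μ) :=
    (isLittleO_iff_tendsto_abs_div (sub_pow_ne_zero_nhdsNE a μ)).2 (by simpa [abs_pow] using hlim)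
  have hxI : ∀ᶠ y in 𝓝[≠] b, hinv y ∈ Ih :=
    hx.eventually (eventually_nhdsWithin_of_eventually_nhds hIh)
  have hfxI : ∀ᶠ y in 𝓝[≠] b, f (hinv y) ∈ Ih :=
    ((tendsto_nhdsNE_of_isLittleO_sub_pow hfo).comp hx).eventually hIh
  have hnum : (fun y => h (f (hinv y)) - y) =O[𝓝[≠] b] (fun y => f (hinv y) - hinv y) :=
    (hL.isBigO_comp_sub_comp hfxI hxI).congr'
      ((eventually_nhdsWithin_of_eventually_nhds hright_nhds).mono fun y hy => by simp only [hy])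
      EventuallyEq.rfl
  have hden : (fun y => (hinv y - a) ^ μ) =O[𝓝[≠] b] (fun y => (y - b) ^ μ) := by
    have hlip := hM.isBigO_comp_sub_comp (u := id) (v := fun _ => b) (l := 𝓝 b) hJb
      (Eventually.of_forall fun _ => mem_of_mem_nhds hJb)
    simpa only [hinvb, id] using (hlip.pow μ).mono nhdsWithin_le_nhds
  have hconj := hnum.trans_isLittleO ((hfo.comp_tendsto hx).trans_isBigO hden)
  simpa [abs_pow] using (isLittleO_iff_tendsto_abs_div (sub_pow_ne_zero_nhdsNE b μ)).1 hconj

theorem stmt_0 (μ : ℕ) (hμ : 1 ≤ μ) (f h hinv : ℝ → ℝ) (a b : ℝ) (L M : NNReal)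
    (Ih Jb : Set ℝ) (hIh : Ih ∈ 𝓝 a) (hJb : Jb ∈ 𝓝 b)
    (hfa : f a = a) (hb : h a = b)
    (hL : LipschitzOnWith L h Ih) (hM : LipschitzOnWith M hinv Jb)
    (hleft : ∀ x ∈ Ih, hinv (h x) = x) (hright : ∀ y ∈ Jb, h (hinv y) = y)
    (hlim : Tendsto (fun x => |f x - x| / |x - a| ^ μ) (𝓝[≠] a) (𝓝 0)) :
    Tendsto (fun y => |h (f (hinv y)) - y| / |y - b| ^ μ) (𝓝[≠] b) (𝓝 0) :=
  stmt_0_general μ f h hinv a b L M Ih Jb hIh hJb hb hL hM hleft hright hlim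
end

section
/- Let f₀ ∈ C^{μ+1} near a and f₁ ∈ C^{μ+1} near b = f₀(a), with F = f₁ ∘ f₀ and G = f₀ ∘ f₁. Assume F(a) = a, G(b) = b, F'(a) = 1, F^{(i)}(a) = 0 for all 2 ≤ i ≤ μ, and F^{(μ+1)}(a) ≠ 0. Then G^{(i)}(b) = 0 for all 2 ≤ i ≤ μ and G^{(μ+1)}(b) ≠ 0. -/
/-!
Since `f₀ ∘ F = G ∘ f₀`, one can differentiate this identity `n` times at `a` with Faà di Bruno's
formula. When `F` and `G` are tangent to the identity and their derivatives of orders `2, …, n - 1`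
vanish at the fixed points, only two ordered partitions of `Fin n` contribute on either side:
the partition into singletons and the partition with a single block. This leaves
`G⁽ⁿ⁾(b) · f₀'(a)ⁿ = f₀'(a) · F⁽ⁿ⁾(a)`, and since `f₀'(a) ≠ 0`, induction on `n` transfers the
vanishing of the derivatives of `F` to `G`, while the case `n = μ + 1` transfers the nonvanishing.
-/

open Finset

namespace OrderedFinpartition

variable {n : ℕ} (c : OrderedFinpartition n)

theorem sum_partSize : ∑ m, c.partSize m = n := by
  simpa using c.sum_sigma_eq_sum (fun _ ↦ (1 : ℕ))

theorem partSize_eq_one_of_length_eq (h : c.length = n) (m : Fin c.length) : c.partSize m = 1 := by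
  have := (Finset.sum_eq_sum_iff_of_le (s := univ) (f := fun _ ↦ 1) (g := c.partSize)
    fun m _ ↦ c.partSize_pos m).1 (by simp [sum_partSize, h])
  exact (this m (mem_univ m)).symm

theorem eq_atomic_of_length_eq (h : c.length = n) : c = atomic n := by
  have hsize := c.partSize_eq_one_of_length_eq h
  rcases c with ⟨length, partSize, _, emb, _, parts_strictMono, _, _⟩
  dsimp only at h hsize
  subst h
  obtain rfl : partSize = fun _ ↦ 1 := funext hsize
  have hemb : (fun m ↦ emb m 0) = id := parts_strictMono.eq_id
  refine OrderedFinpartition.ext rfl HEq.rfl (heq_of_eq ?_)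
  funext m i
  rw [Subsingleton.elim i 0]
  exact congrFun hemb m

@[simps length]
def single (n : ℕ) (hn : 0 < n) : OrderedFinpartition n where
  length := 1
  partSize _ := n
  partSize_pos _ := hn
  emb _ := id
  emb_strictMono _ := strictMono_id
  parts_strictMono := Subsingleton.strictMono _
  disjoint := Set.subsingleton_of_subsingleton.pairwise _
  cover x := ⟨0, x, rfl⟩

theorem eq_single_of_length_eq_one (hn : 0 < n) (h : c.length = 1) : c = single n hn := by
  have : Subsingleton (Fin c.length) := by rw [h]; infer_instance
  have hsize (m) : c.partSize m = n := by
    rw [← Fintype.sum_subsingleton c.partSize m, c.sum_partSize]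
  rcases c with ⟨length, partSize, _, emb, emb_strictMono, _, _, _⟩
  dsimp only at h hsize
  subst h
  obtain rfl : partSize = fun _ ↦ n := funext hsize
  refine OrderedFinpartition.ext rfl HEq.rfl (heq_of_eq ?_)
  funext m
  exact (emb_strictMono m).eq_id

theorem exists_one_lt_partSize_lt (h1 : 1 < c.length) (hn : c.length < n) :
    ∃ m, 1 < c.partSize m ∧ c.partSize m < n := by
  obtain ⟨m, hm⟩ : ∃ m, c.partSize m ≠ 1 := by
    by_contra! hall
    exact hn.ne (by simpa [hall] using c.sum_partSize)
  have : Nontrivial (Fin c.length) := Fin.nontrivial_iff_two_le.2 h1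
  obtain ⟨m', hm'⟩ := exists_ne m
  refine ⟨m, lt_of_le_of_ne (c.partSize_pos m) hm.symm, ?_⟩
  calc c.partSize m
    _ < ∑ k, c.partSize k :=
      single_lt_sum hm' (mem_univ m) (mem_univ m') (c.partSize_pos m') fun _ _ _ ↦ Nat.zero_le _
    _ = n := c.sum_partSize

end OrderedFinpartition

section FaaDiBruno

variable {𝕜 : Type*} [NontriviallyNormedField 𝕜] {f g : 𝕜 → 𝕜} {x : 𝕜} {n : ℕ}

open OrderedFinpartition in
theorem iteratedDeriv_comp_eq_of_middle_terms_eq_zero (hg : ContDiffAt 𝕜 n g (f x))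
    (hf : ContDiffAt 𝕜 n f x) (hn : 2 ≤ n)
    (hmid : ∀ c : OrderedFinpartition n, 1 < c.length → c.length < n →
      iteratedDeriv c.length g (f x) * ∏ m, iteratedDeriv (c.partSize m) f x = 0) :
    iteratedDeriv n (g ∘ f) x =
      iteratedDeriv n g (f x) * deriv f x ^ n + deriv g (f x) * iteratedDeriv n f x := by
  have hn0 : 0 < n := by omega
  rw [iteratedDeriv_comp_eq_sum_orderedFinpartition hg hf le_rfl,
    Fintype.sum_eq_add (atomic n) (single n hn0)]
  · have hsingle : ∏ m, iteratedDeriv ((single n hn0).partSize m) f x = iteratedDeriv n f x :=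
      Fin.prod_univ_one _
    simp [hsingle]
  · intro h
    have := congrArg length h
    simp only [atomic_length, single_length] at this
    omega
  · rintro c ⟨hca, hcs⟩
    refine hmid c ?_ ?_
    · have := c.length_pos hn0
      have : c.length ≠ 1 := fun h ↦ hcs (c.eq_single_of_length_eq_one hn0 h)
      omega
    · exact lt_of_le_of_ne c.length_le fun h ↦ hca (c.eq_atomic_of_length_eq h)

theorem iteratedDeriv_comp_of_outer_flat (hg : ContDiffAt 𝕜 n g (f x)) (hf : ContDiffAt 𝕜 n f x)
    (hn : 2 ≤ n) (hflat : ∀ i, 1 < i → i < n → iteratedDeriv i g (f x) = 0) :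
    iteratedDeriv n (g ∘ f) x =
      iteratedDeriv n g (f x) * deriv f x ^ n + deriv g (f x) * iteratedDeriv n f x :=
  iteratedDeriv_comp_eq_of_middle_terms_eq_zero hg hf hn fun _ h1 h2 ↦ by
    rw [hflat _ h1 h2, zero_mul]

theorem iteratedDeriv_comp_of_inner_flat (hg : ContDiffAt 𝕜 n g (f x)) (hf : ContDiffAt 𝕜 n f x)
    (hn : 2 ≤ n) (hflat : ∀ i, 1 < i → i < n → iteratedDeriv i f x = 0) :
    iteratedDeriv n (g ∘ f) x =
      iteratedDeriv n g (f x) * deriv f x ^ n + deriv g (f x) * iteratedDeriv n f x :=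
  iteratedDeriv_comp_eq_of_middle_terms_eq_zero hg hf hn fun c h1 h2 ↦ by
    obtain ⟨m, hm1, hm2⟩ := c.exists_one_lt_partSize_lt h1 h2
    rw [prod_eq_zero (mem_univ m) (hflat _ hm1 hm2), mul_zero]

end FaaDiBruno

namespace Function.Semiconj

variable {𝕜 : Type*} [NontriviallyNormedField 𝕜] {h F G : 𝕜 → 𝕜} {a : 𝕜} {n N : ℕ}

theorem iteratedDeriv_mul_deriv_pow (hsc : Semiconj h F G) (hn : 2 ≤ n)
    (hh : ContDiffAt 𝕜 n h a) (hF : ContDiffAt 𝕜 n F a) (hG : ContDiffAt 𝕜 n G (h a))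
    (hFa : F a = a) (hF1 : deriv F a = 1) (hG1 : deriv G (h a) = 1)
    (hFflat : ∀ i, 1 < i → i < n → iteratedDeriv i F a = 0)
    (hGflat : ∀ i, 1 < i → i < n → iteratedDeriv i G (h a) = 0) :
    iteratedDeriv n G (h a) * deriv h a ^ n = deriv h a * iteratedDeriv n F a := by
  have key := congrArg (iteratedDeriv n · a) hsc.comp_eq
  rw [iteratedDeriv_comp_of_inner_flat (by rwa [hFa]) hF hn hFflat,
    iteratedDeriv_comp_of_outer_flat hG hh hn hGflat, hFa, hF1, hG1] at key
  linear_combination -key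

theorem iteratedDeriv_eq_zero_of_flat (hsc : Semiconj h F G)
    (hh : ContDiffAt 𝕜 N h a) (hF : ContDiffAt 𝕜 N F a) (hG : ContDiffAt 𝕜 N G (h a))
    (hFa : F a = a) (hF1 : deriv F a = 1) (hG1 : deriv G (h a) = 1) (hh0 : deriv h a ≠ 0)
    (hFflat : ∀ i, 1 < i → i < N → iteratedDeriv i F a = 0) :
    ∀ i, 1 < i → i < N → iteratedDeriv i G (h a) = 0 := by
  intro i
  induction i using Nat.strong_induction_on with
  | _ i ih =>
    intro hi hiN
    have hiN' : (i : WithTop ℕ∞) ≤ N := by exact_mod_cast hiN.le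
    have key := hsc.iteratedDeriv_mul_deriv_pow hi (hh.of_le hiN') (hF.of_le hiN')
      (hG.of_le hiN') hFa hF1 hG1 (fun j hj hji ↦ hFflat j hj (hji.trans hiN))
      fun j hj hji ↦ ih j hji hj (hji.trans hiN)
    rw [hFflat i hi hiN, mul_zero] at key
    exact (mul_eq_zero.1 key).resolve_right (pow_ne_zero _ hh0)

end Function.Semiconj

theorem stmt_3 (μ : ℕ) (hμ : 2 ≤ μ) (f₀ f₁ : ℝ → ℝ) (a b : ℝ)
    (hb : f₀ a = b) (ha : f₁ b = a)
    (hf₀ : ContDiffAt ℝ (↑(μ + 1)) f₀ a) (hf₁ : ContDiffAt ℝ (↑(μ + 1)) f₁ b)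
    (hF1 : deriv (f₁ ∘ f₀) a = 1)
    (hFi : ∀ i, 2 ≤ i → i ≤ μ → iteratedDeriv i (f₁ ∘ f₀) a = 0)
    (hFnd : iteratedDeriv (μ + 1) (f₁ ∘ f₀) a ≠ 0) :
    (∀ i, 2 ≤ i → i ≤ μ → iteratedDeriv i (f₀ ∘ f₁) b = 0) ∧
      iteratedDeriv (μ + 1) (f₀ ∘ f₁) b ≠ 0 := by
  subst hb
  have hf₀' : ContDiffAt ℝ (↑(μ + 1)) f₀ (f₁ (f₀ a)) := by rwa [ha]
  have hchain : deriv f₁ (f₀ a) * deriv f₀ a = 1 := by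
    rw [← deriv_comp a (hf₁.differentiableAt (by simp)) (hf₀.differentiableAt (by simp)), hF1]
  have hG1 : deriv (f₀ ∘ f₁) (f₀ a) = 1 := by
    rw [deriv_comp _ (hf₀'.differentiableAt (by simp)) (hf₁.differentiableAt (by simp)), ha,
      mul_comm, hchain]
  have hd₀ : deriv f₀ a ≠ 0 := right_ne_zero_of_mul_eq_one hchain
  have hsc : Function.Semiconj f₀ (f₁ ∘ f₀) (f₀ ∘ f₁) := fun _ ↦ rfl
  have hF : ContDiffAt ℝ (↑(μ + 1)) (f₁ ∘ f₀) a := hf₁.comp a hf₀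
  have hG : ContDiffAt ℝ (↑(μ + 1)) (f₀ ∘ f₁) (f₀ a) := hf₀'.comp _ hf₁
  have hFflat : ∀ i, 1 < i → i < μ + 1 → iteratedDeriv i (f₁ ∘ f₀) a = 0 :=
    fun i hi hiμ ↦ hFi i hi (by omega)
  have hGflat := hsc.iteratedDeriv_eq_zero_of_flat hf₀ hF hG ha hF1 hG1 hd₀ hFflat
  refine ⟨fun i hi hiμ ↦ hGflat i hi (by omega), fun hG0 ↦ hFnd ?_⟩
  have key := hsc.iteratedDeriv_mul_deriv_pow (by omega) hf₀ hF hG ha hF1 hG1 hFflat hGflat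
  rw [hG0, zero_mul] at key
  exact (mul_eq_zero.1 key.symm).resolve_left hd₀
end

section
/- Let f₀ ∈ C^3 near a and f₁ ∈ C^3 near b = f₀(a) with f₁(b) = a. If (f₁ ∘ f₀)'(a) = 1, (f₁ ∘ f₀)''(a) = 0, and (f₁ ∘ f₀)'''(a) = 0, then (f₀ ∘ f₁)'''(b) = 0. -/
/-! Both third derivatives are given by Faà di Bruno's formula in the same six numbers
`f₀', f₀'', f₀'''` at `a` and `f₁', f₁'', f₁'''` at `b`. Once `f₁'(b) f₀'(a) = 1`, multiplying
`(f₀ ∘ f₁)'''(b)` by `f₀'(a)²` turns it into `(f₁ ∘ f₀)'''(a)`, so one vanishes iff the other does. -/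

section

variable {𝕜 : Type*} [NontriviallyNormedField 𝕜] {f g : 𝕜 → 𝕜} {x : 𝕜}

theorem deriv_mul_deriv_eq_one_of_deriv_comp_eq_one (hf : DifferentiableAt 𝕜 f x)
    (hg : DifferentiableAt 𝕜 g (f x)) (h : deriv (g ∘ f) x = 1) :
    deriv g (f x) * deriv f x = 1 := by
  rwa [deriv_comp x hg hf] at h

theorem deriv_sq_mul_iteratedDeriv_three_comp_swap (hf : ContDiffAt 𝕜 3 f x)
    (hg : ContDiffAt 𝕜 3 g (f x)) (hgf : g (f x) = x)
    (hchain : deriv g (f x) * deriv f x = 1) :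
    deriv f x ^ 2 * iteratedDeriv 3 (f ∘ g) (f x) = iteratedDeriv 3 (g ∘ f) x := by
  have hf' : ContDiffAt 𝕜 3 f (g (f x)) := by rwa [hgf]
  rw [iteratedDeriv_comp_three hf' hg, iteratedDeriv_comp_three hg hf, hgf]
  linear_combination (iteratedDeriv 3 f x * deriv g (f x) * (deriv g (f x) * deriv f x + 1) +
    3 * iteratedDeriv 2 g (f x) * iteratedDeriv 2 f x * deriv f x) * hchain

end

theorem stmt_5_general (f₀ f₁ : ℝ → ℝ) (a b : ℝ)
    (hb : f₀ a = b) (ha : f₁ b = a)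
    (hf₀ : ContDiffAt ℝ 3 f₀ a) (hf₁ : ContDiffAt ℝ 3 f₁ b)
    (hF1 : deriv (f₁ ∘ f₀) a = 1)
    (hF3 : iteratedDeriv 3 (f₁ ∘ f₀) a = 0) :
    iteratedDeriv 3 (f₀ ∘ f₁) b = 0 := by
  subst hb
  have hchain := deriv_mul_deriv_eq_one_of_deriv_comp_eq_one
    (hf₀.differentiableAt (by norm_num)) (hf₁.differentiableAt (by norm_num)) hF1
  have key := deriv_sq_mul_iteratedDeriv_three_comp_swap hf₀ hf₁ ha hchain
  rw [hF3] at key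
  exact (mul_eq_zero.mp key).resolve_left (pow_ne_zero 2 (right_ne_zero_of_mul_eq_one hchain))

theorem stmt_5 (f₀ f₁ : ℝ → ℝ) (a b : ℝ)
    (hb : f₀ a = b) (ha : f₁ b = a)
    (hf₀ : ContDiffAt ℝ 3 f₀ a) (hf₁ : ContDiffAt ℝ 3 f₁ b)
    (hF1 : deriv (f₁ ∘ f₀) a = 1)
    (hF2 : iteratedDeriv 2 (f₁ ∘ f₀) a = 0)
    (hF3 : iteratedDeriv 3 (f₁ ∘ f₀) a = 0) :
    iteratedDeriv 3 (f₀ ∘ f₁) b = 0 :=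
  stmt_5_general f₀ f₁ a b hb ha hf₀ hf₁ hF1 hF3
end

section
/- Let h : ℝ → ℝ be a homeomorphism between open neighborhoods of a and b = h(a), Lipschitz with constant L, with h⁻¹ Lipschitz with constant M, and let f fix a with f Lipschitz near a. If c₁ ≤ liminf_{x→a} |f(x)−x|/|x−a|^{μ+1} and g = h∘f∘h⁻¹, then liminf_{y→b} |g(y)−y|/|y−b|^{μ+1} ≥ c₁/(M·L^{μ+1}). -/
/-!
For `y` near `b` put `x = hinv y`. The Lipschitz bounds give `|f x - x| ≤ M * |g y - y|` and
`|y - b| ≤ L * |x - a|`, so the contact ratio of `f` at `x` is at most `M * L ^ (μ + 1)` times that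
of `g = h ∘ f ∘ hinv` at `y`; since `hinv` maps punctured neighbourhoods of `b` into punctured
neighbourhoods of `a`, this passes to the liminfs. The symmetric bound, with constant
`L * M ^ (μ + 1)`, is needed only because the real `liminf` takes the junk value `0` when the
ratio tends to `+∞`: it makes this happen for both ratios or for neither.
-/

open Filter Topology

theorem Real.sSup_le_mul_sSup_of_div_mem {S T : Set ℝ} {D E : ℝ} (hD : 0 < D) (hE : 0 < E)
    (hT : 0 ∈ T) (hST : ∀ c ∈ S, c / D ∈ T) (hTS : ∀ c ∈ T, c / E ∈ S) :
    sSup S ≤ D * sSup T := by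
  by_cases hbdd : BddAbove T
  · exact Real.sSup_le (fun c hc => (div_le_iff₀' hD).1 (le_csSup hbdd (hST c hc)))
      (mul_nonneg hD.le (le_csSup hbdd hT))
  · have hS : ¬BddAbove S := fun ⟨B, hB⟩ =>
      hbdd ⟨E * B, fun c hc => (div_le_iff₀' hE).1 (hB (hTS c hc))⟩
    rw [Real.sSup_of_not_bddAbove hS, Real.sSup_of_not_bddAbove hbdd, mul_zero]

theorem Filter.liminf_le_mul_liminf_of_comp_le {α β : Type*} {la : Filter α} {lb : Filter β}
    {F : α → ℝ} {G : β → ℝ} {φ : β → α} {ψ : α → β} {D E : ℝ} (hD : 0 < D) (hE : 0 < E)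
    (hφ : Tendsto φ lb la) (hψ : Tendsto ψ la lb) (hG : ∀ y, 0 ≤ G y)
    (hFG : ∀ᶠ y in lb, F (φ y) ≤ D * G y) (hGF : ∀ᶠ x in la, G (ψ x) ≤ E * F x) :
    liminf F la ≤ D * liminf G lb := by
  simp only [liminf_eq]
  refine Real.sSup_le_mul_sSup_of_div_mem hD hE (.of_forall hG) (fun c hc => ?_) (fun c hc => ?_)
  · filter_upwards [hφ.eventually hc, hFG] with y hcF hFG
    exact (div_le_iff₀' hD).2 (hcF.trans hFG)
  · filter_upwards [hψ.eventually hc, hGF] with x hcG hGF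
    exact (div_le_iff₀' hE).2 (hcG.trans hGF)

theorem tendsto_nhdsNE_of_injOn {X Y : Type*} [TopologicalSpace X] [TopologicalSpace Y]
    {h : X → Y} {a : X} {s : Set X} (hc : ContinuousAt h a) (hs : s ∈ 𝓝 a)
    (hinj : Set.InjOn h s) : Tendsto h (𝓝[≠] a) (𝓝[≠] h a) := by
  refine tendsto_nhdsWithin_iff.2 ⟨hc.mono_left nhdsWithin_le_nhds, ?_⟩
  filter_upwards [nhdsWithin_le_nhds hs, self_mem_nhdsWithin] with x hx hxa
  exact fun hxa' => hxa (hinj hx (mem_of_mem_nhds hs) hxa')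

theorem continuousAt_of_abs_sub_le_mul {φ : ℝ → ℝ} {s : Set ℝ} {p C : ℝ} (hs : s ∈ 𝓝 p)
    (hφ : ∀ x ∈ s, ∀ y ∈ s, |φ x - φ y| ≤ C * |x - y|) : ContinuousAt φ p :=
  (LipschitzOnWith.of_dist_le' hφ).continuousOn.continuousAt hs

theorem div_pow_le_mul_pow_mul_div_pow {p q s t C K : ℝ} (n : ℕ) (hC : 0 ≤ C) (hq : 0 ≤ q)
    (hs : 0 < s) (ht : 0 < t) (hpq : p ≤ C * q) (hst : s ≤ K * t) :
    p / t ^ n ≤ C * K ^ n * (q / s ^ n) := by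
  rw [mul_div_assoc', div_le_div_iff₀ (pow_pos ht n) (pow_pos hs n)]
  calc p * s ^ n ≤ C * q * (K * t) ^ n :=
        mul_le_mul hpq (pow_le_pow_left₀ hs.le hst n) (pow_nonneg hs.le n) (mul_nonneg hC hq)
    _ = C * K ^ n * q * t ^ n := by ring

noncomputable def contactRatio (n : ℕ) (g : ℝ → ℝ) (b y : ℝ) : ℝ := |g y - y| / |y - b| ^ n

theorem contactRatio_nonneg (n : ℕ) (g : ℝ → ℝ) (b y : ℝ) : 0 ≤ contactRatio n g b y :=
  div_nonneg (abs_nonneg _) (pow_nonneg (abs_nonneg _) n)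

section Conjugacy

variable {f h hinv : ℝ → ℝ} {a b L M : ℝ} {Ih Jb : Set ℝ}

theorem eventually_contactRatio_le_contactRatio_conj (n : ℕ) (hM : 0 ≤ M)
    (hIh : Ih ∈ 𝓝 a) (hJb : Jb ∈ 𝓝 b) (hf : ContinuousAt f a) (hfa : f a = a) (hba : h a = b)
    (hLip : ∀ x ∈ Ih, ∀ y ∈ Ih, |h x - h y| ≤ L * |x - y|)
    (hMip : ∀ x ∈ Jb, ∀ y ∈ Jb, |hinv x - hinv y| ≤ M * |x - y|)
    (hleft : Set.LeftInvOn hinv h Ih) (hright : Set.RightInvOn hinv h Jb) :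
    ∀ᶠ y in 𝓝[≠] b,
      contactRatio n f a (hinv y) ≤ M * L ^ n * contactRatio n (h ∘ f ∘ hinv) b y := by
  have ha : a ∈ Ih := mem_of_mem_nhds hIh
  have hinvb : hinv b = a := hba ▸ hleft ha
  have hinv_tendsto : Tendsto hinv (𝓝 b) (𝓝 a) :=
    hinvb ▸ (continuousAt_of_abs_sub_le_mul hJb hMip).tendsto
  have hf_tendsto : Tendsto f (𝓝 a) (𝓝 a) := by simpa only [hfa] using hf.tendsto
  have hh_tendsto : Tendsto h (𝓝 a) (𝓝 b) :=
    hba ▸ (continuousAt_of_abs_sub_le_mul hIh hLip).tendsto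
  rw [eventually_nhdsWithin_iff]
  filter_upwards [hJb, hinv_tendsto hIh, (hf_tendsto.comp hinv_tendsto) hIh,
    (hh_tendsto.comp (hf_tendsto.comp hinv_tendsto)) hJb] with y hyJ hxI hfxI hgyJ hyb
  have hhx : h (hinv y) = y := hright hyJ
  have hxa : hinv y ≠ a := fun hxa => hyb (by rw [← hhx, hxa, hba]; rfl)
  refine div_pow_le_mul_pow_mul_div_pow n hM (abs_nonneg _) (abs_pos.2 (sub_ne_zero.2 hyb))
    (abs_pos.2 (sub_ne_zero.2 hxa)) ?_ ?_
  · simpa only [Function.comp_apply, hleft (show f (hinv y) ∈ Ih from hfxI)] using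
      hMip _ hgyJ y hyJ
  · simpa only [hhx, hba] using hLip _ hxI a ha

theorem eventually_contactRatio_conj_le_contactRatio (n : ℕ) (hL : 0 ≤ L)
    (hIh : Ih ∈ 𝓝 a) (hJb : Jb ∈ 𝓝 b) (hf : ContinuousAt f a) (hfa : f a = a) (hba : h a = b)
    (hLip : ∀ x ∈ Ih, ∀ y ∈ Ih, |h x - h y| ≤ L * |x - y|)
    (hMip : ∀ x ∈ Jb, ∀ y ∈ Jb, |hinv x - hinv y| ≤ M * |x - y|)
    (hleft : Set.LeftInvOn hinv h Ih) :
    ∀ᶠ x in 𝓝[≠] a,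
      contactRatio n (h ∘ f ∘ hinv) b (h x) ≤ L * M ^ n * contactRatio n f a x := by
  have hinvb : hinv b = a := hba ▸ hleft (mem_of_mem_nhds hIh)
  have hf_tendsto : Tendsto f (𝓝 a) (𝓝 a) := by simpa only [hfa] using hf.tendsto
  have hh_tendsto : Tendsto h (𝓝 a) (𝓝 b) :=
    hba ▸ (continuousAt_of_abs_sub_le_mul hIh hLip).tendsto
  rw [eventually_nhdsWithin_iff]
  filter_upwards [hIh, hf_tendsto hIh, hh_tendsto hJb] with x hxI hfxI hhxJ hxa
  have hhxb : h x ≠ b := fun hhxb => hxa (by rw [← hleft hxI, hhxb, hinvb]; rfl)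
  simp only [contactRatio, Function.comp_apply, hleft hxI]
  refine div_pow_le_mul_pow_mul_div_pow n hL (abs_nonneg _) (abs_pos.2 (sub_ne_zero.2 hxa))
    (abs_pos.2 (sub_ne_zero.2 hhxb)) (hLip _ hfxI _ hxI) ?_
  simpa only [hleft hxI, hinvb] using hMip _ hhxJ _ (mem_of_mem_nhds hJb)

end Conjugacy

theorem stmt_18_general (μ : ℕ) (f h hinv : ℝ → ℝ) (a b : ℝ)
    (L M K : ℝ) (hL : 0 < L) (hM : 0 < M)
    (Ih Jb U : Set ℝ) (hIh : Ih ∈ 𝓝 a) (hJb : Jb ∈ 𝓝 b) (hU : U ∈ 𝓝 a)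
    (hfa : f a = a) (hba : h a = b)
    (hLip : ∀ x ∈ Ih, ∀ y ∈ Ih, |h x - h y| ≤ L * |x - y|)
    (hMip : ∀ x ∈ Jb, ∀ y ∈ Jb, |hinv x - hinv y| ≤ M * |x - y|)
    (hfLip : ∀ x ∈ U, ∀ y ∈ U, |f x - f y| ≤ K * |x - y|)
    (hleft : ∀ x ∈ Ih, hinv (h x) = x) (hright : ∀ y ∈ Jb, h (hinv y) = y)
    (c₁ : ℝ)
    (hc : c₁ ≤ liminf (fun x => |f x - x| / |x - a| ^ (μ + 1)) (𝓝[≠] a)) :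
    c₁ / (M * L ^ (μ + 1)) ≤
      liminf (fun y => |h (f (hinv y)) - y| / |y - b| ^ (μ + 1)) (𝓝[≠] b) := by
  have hf : ContinuousAt f a := continuousAt_of_abs_sub_le_mul hU hfLip
  have hinvb : hinv b = a := hba ▸ hleft a (mem_of_mem_nhds hIh)
  have hφ : Tendsto hinv (𝓝[≠] b) (𝓝[≠] a) := hinvb ▸ tendsto_nhdsNE_of_injOn
    (continuousAt_of_abs_sub_le_mul hJb hMip) hJb (Set.LeftInvOn.injOn hright)
  have hψ : Tendsto h (𝓝[≠] a) (𝓝[≠] b) := hba ▸ tendsto_nhdsNE_of_injOn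
    (continuousAt_of_abs_sub_le_mul hIh hLip) hIh (Set.LeftInvOn.injOn hleft)
  have key : liminf (contactRatio (μ + 1) f a) (𝓝[≠] a) ≤
      M * L ^ (μ + 1) * liminf (contactRatio (μ + 1) (h ∘ f ∘ hinv) b) (𝓝[≠] b) :=
    liminf_le_mul_liminf_of_comp_le (by positivity) (by positivity) hφ hψ
      (contactRatio_nonneg _ _ _)
      (eventually_contactRatio_le_contactRatio_conj _ hM.le hIh hJb hf hfa hba hLip hMip
        hleft hright)
      (eventually_contactRatio_conj_le_contactRatio _ hL.le hIh hJb hf hfa hba hLip hMip hleft)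
  rw [div_le_iff₀' (by positivity)]
  exact hc.trans key

theorem stmt_18 (μ : ℕ) (hμ : 1 ≤ μ) (f h hinv : ℝ → ℝ) (a b : ℝ)
    (L M K : ℝ) (hL : 0 < L) (hM : 0 < M)
    (Ih Jb U : Set ℝ) (hIh : Ih ∈ 𝓝 a) (hJb : Jb ∈ 𝓝 b) (hU : U ∈ 𝓝 a)
    (hfa : f a = a) (hba : h a = b)
    (hLip : ∀ x ∈ Ih, ∀ y ∈ Ih, |h x - h y| ≤ L * |x - y|)
    (hMip : ∀ x ∈ Jb, ∀ y ∈ Jb, |hinv x - hinv y| ≤ M * |x - y|)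
    (hfLip : ∀ x ∈ U, ∀ y ∈ U, |f x - f y| ≤ K * |x - y|)
    (hleft : ∀ x ∈ Ih, hinv (h x) = x) (hright : ∀ y ∈ Jb, h (hinv y) = y)
    (c₁ : ℝ)
    (hc : c₁ ≤ liminf (fun x => |f x - x| / |x - a| ^ (μ + 1)) (𝓝[≠] a)) :
    c₁ / (M * L ^ (μ + 1)) ≤
      liminf (fun y => |h (f (hinv y)) - y| / |y - b| ^ (μ + 1)) (𝓝[≠] b) :=
  stmt_18_general μ f h hinv a b L M K hL hM Ih Jb U hIh hJb hU hfa hba hLip hMip hfLip hleft hright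
    c₁ hc
end
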